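/- In the Grassmann algebra G, if h is an n-linear map given by a multilinear polynomial in variables x_1,...,x_{n-1} that is not an identity of G (i.e., there exist substitutions of products of distinct generators making h nonzero), then x_n · h(x_1, ..., x_{n-1}) is not a central polynomial of G: there exist pairwise disjoint products of generators ā_1, ..., ā_n with ā_n · h(ā_1, ..., ā_{n-1}) not in the center of G. -/

import Mathlib

/-- The generators of the infinite-dimensional Grassmann algebra over `F`. -/
noncomputable def grassmannGen (F : Type*) [Field F] (i : ℕ) :
    ExteriorAlgebra F (ℕ →₀ F) :=
  ExteriorAlgebra.ι F (Finsupp.single i 1)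

/-!
Only even elements can be central: for a generator `e_k` not occurring in `y`, contraction
with the dual of `e_k` is a left inverse of `e_k * ·` on `y`, while `e_k` anticommutes with the
odd part of `y`. So if `g = h(ā)` is not even, `x_n := 1` works; if it is even, `x_n := e_k`
for a fresh `k` makes `e_k g` odd and nonzero.
-/

open Filter

namespace CliffordAlgebra

variable {R M : Type*} [CommRing R] [AddCommGroup M] [Module R M] {Q : QuadraticForm R M}

theorem contractLeft_mul (d : Module.Dual R M) (a b : CliffordAlgebra Q) :
    contractLeft d (a * b) = contractLeft d a * b + involute a * contractLeft d b := by
  induction a using CliffordAlgebra.induction generalizing b with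
  | algebraMap r =>
    simp [contractLeft_algebraMap_mul, contractLeft_algebraMap]
  | ι w =>
    rw [contractLeft_ι_mul, contractLeft_ι, involute_ι, Algebra.smul_def, neg_mul,
      ← sub_eq_add_neg]
  | mul a₁ a₂ ha₁ ha₂ =>
    rw [mul_assoc, ha₁, ha₂, ha₁ a₂, map_mul]
    noncomm_ring
  | add a₁ a₂ ha₁ ha₂ =>
    simp only [add_mul, ha₁, ha₂, map_add]
    abel

theorem eq_zero_of_ι_mul_eq_zero {d : Module.Dual R M} {v : M} (hv : d v = 1)
    {x : CliffordAlgebra Q} (hx : contractLeft d x = 0) (h : ι Q v * x = 0) : x = 0 := by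
  simpa [contractLeft_ι_mul, hv, hx] using congrArg (contractLeft d) h

theorem eventually_contractLeft_lapply_eq_zero {κ : Type*} {Q : QuadraticForm R (κ →₀ R)}
    (x : CliffordAlgebra Q) : ∀ᶠ k in cofinite, contractLeft (Finsupp.lapply k) x = 0 := by
  induction x using CliffordAlgebra.induction with
  | algebraMap r => exact .of_forall fun _ => contractLeft_algebraMap ..
  | ι w =>
    filter_upwards [w.support.eventually_cofinite_notMem] with k hk
    rw [contractLeft_ι, Finsupp.lapply_apply, Finsupp.notMem_support_iff.1 hk, map_zero]
  | mul a b ha hb =>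
    filter_upwards [ha, hb] with k hak hbk
    rw [contractLeft_mul, hak, hbk, zero_mul, mul_zero, add_zero]
  | add a b ha hb =>
    filter_upwards [ha, hb] with k hak hbk
    rw [map_add, hak, hbk, add_zero]

end CliffordAlgebra

namespace ExteriorAlgebra

open CliffordAlgebra

variable {R : Type*} [CommRing R]

theorem ι_mul_eq_involute_mul {M : Type*} [AddCommGroup M] [Module R M] (v : M)
    (x : ExteriorAlgebra R M) : ι R v * x = involute x * ι R v := by
  induction x using CliffordAlgebra.induction with
  | algebraMap r => simp [Algebra.commutes]
  | ι w => rw [involute_ι, neg_mul, eq_neg_iff_add_eq_zero, ι_add_mul_swap]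
  | mul a b ha hb => rw [← mul_assoc, ha, mul_assoc, hb, ← mul_assoc, map_mul]
  | add a b ha hb => rw [mul_add, ha, hb, map_add, add_mul]

theorem involute_eq_self_of_mem_center {κ : Type*} [Infinite κ]
    {y : ExteriorAlgebra R (κ →₀ R)}
    (hy : y ∈ Subalgebra.center R (ExteriorAlgebra R (κ →₀ R))) : involute y = y := by
  obtain ⟨k, hk⟩ := (eventually_contractLeft_lapply_eq_zero (y - involute y)).exists
  have hcomm : ι R (Finsupp.single k 1) * (y - involute y) = 0 := by
    rw [mul_sub, ι_mul_eq_involute_mul _ (involute y), involute_involute,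
      Subalgebra.mem_center_iff.1 hy, sub_self]
  exact (sub_eq_zero.1 (eq_zero_of_ι_mul_eq_zero (by simp) hk hcomm)).symm

end ExteriorAlgebra

def IsDisjointSubstitution {α : Type*} {n : ℕ} (l : Fin n → List α) : Prop :=
  (∀ i, (l i).Nodup) ∧ ∀ i j, i ≠ j → (l i).Disjoint (l j)

theorem IsDisjointSubstitution.snoc {α : Type*} {n : ℕ} {l : Fin n → List α}
    (hl : IsDisjointSubstitution l) {L : List α} (hL : L.Nodup) (hdisj : ∀ i, (l i).Disjoint L) :
    IsDisjointSubstitution (Fin.snoc (α := fun _ => List α) l L) := by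
  refine ⟨Fin.lastCases (by simpa) fun i => by simpa using hl.1 i, ?_⟩
  intro i j hij
  induction i using Fin.lastCases <;> induction j using Fin.lastCases
  · exact absurd rfl hij
  · simpa using (hdisj _).symm
  · simpa using hdisj _
  · simpa using hl.2 _ _ fun h => hij (by rw [h])

open CliffordAlgebra in
/-- If a multilinear map `h` (given by a multilinear polynomial in `m`
variables) does not vanish on some disjoint substitution of products of
distinct generators, then `x_{m+1} · h(x_1,…,x_m)` is not central: there is a
disjoint substitution `ā` with `ā_{m+1} · h(ā_1,…,ā_m)` not in the center. -/
theorem nonidentity_times_variable_not_central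
    (F : Type*) [Field F] [CharZero F] (m : ℕ)
    (h : MultilinearMap F (fun _ : Fin m => ExteriorAlgebra F (ℕ →₀ F))
      (ExteriorAlgebra F (ℕ →₀ F)))
    (hid : ∃ l : Fin m → List ℕ, (∀ i, (l i).Nodup) ∧
      (∀ i j, i ≠ j → (l i).Disjoint (l j)) ∧
      h (fun i => ((l i).map (grassmannGen F)).prod) ≠ 0) :
    ∃ l : Fin (m + 1) → List ℕ, (∀ i, (l i).Nodup) ∧
      (∀ i j, i ≠ j → (l i).Disjoint (l j)) ∧
      ((l (Fin.last m)).map (grassmannGen F)).prod *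
          h (fun i => ((l i.castSucc).map (grassmannGen F)).prod) ∉
        Subalgebra.center F (ExteriorAlgebra F (ℕ →₀ F)) := by
  obtain ⟨l, hnodup, hdisj, hg⟩ := hid
  have hl : IsDisjointSubstitution l := ⟨hnodup, hdisj⟩
  set g := h (fun i => ((l i).map (grassmannGen F)).prod)
  by_cases heven : involute g = g
  · obtain ⟨k, hk_fresh, hk_g⟩ :=
      ((eventually_all.2 fun i => (l i).toFinset.eventually_cofinite_notMem).and
        (eventually_contractLeft_lapply_eq_zero g)).exists
    obtain ⟨hnodup', hdisj'⟩ := hl.snoc (List.nodup_singleton k)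
      fun i => List.disjoint_singleton.2 (by simpa using hk_fresh i)
    refine ⟨_, hnodup', hdisj', ?_⟩
    simp only [Fin.snoc_last, Fin.snoc_castSucc, List.map_singleton, List.prod_singleton]
    intro hcentral
    have hodd : involute (grassmannGen F k * g) = -(grassmannGen F k * g) := by
      simp [grassmannGen, heven]
    have := IsAddTorsionFree.of_module_rat (ExteriorAlgebra F (ℕ →₀ F))
    have hzero : grassmannGen F k * g = 0 :=
      self_eq_neg.1 (hodd ▸ (ExteriorAlgebra.involute_eq_self_of_mem_center hcentral).symm)
    exact hg (eq_zero_of_ι_mul_eq_zero (by simp) hk_g hzero)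
  · obtain ⟨hnodup', hdisj'⟩ := hl.snoc List.nodup_nil fun _ => List.disjoint_nil_right _
    refine ⟨_, hnodup', hdisj', ?_⟩
    simpa using mt ExteriorAlgebra.involute_eq_self_of_mem_center heven
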